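/- Let H be an infinite-dimensional separable complex Hilbert space with orthonormal basis (e_m)_{m∈ℕ}, let U : H → H be a unitary operator, and let λ_1, …, λ_d ∈ ℂ with |λ_j| < 1 for each j. Define B(U*) := ∏_{j=1}^d (U* + λ_j·1)(1 + conj(λ_j)U*)⁻¹ and b_m := B(U*) e_m for m ∈ ℕ. Then the sequence (b_m)_{m∈ℕ} is exact: for every k ∈ ℕ, b_k does not lie in the closed linear span of {b_m : m ∈ ℕ, m ≠ k}; in particular the closed linear span of {b_m : m ≠ k} is a proper subspace of H for every k. -/
import Mathlib

open scoped InnerProductSpace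


/-- The Blaschke operator `B(U*) = ∏_j (U* + λ_j·1)(1 + conj(λ_j)U*)⁻¹`. -/
noncomputable def blaschkeOp {H : Type*} [NormedAddCommGroup H] [InnerProductSpace ℂ H]
    [CompleteSpace H] (U : H →L[ℂ] H) {d : ℕ} (lam : Fin d → ℂ) : H →L[ℂ] H :=
  (List.ofFn fun j =>
    (ContinuousLinearMap.adjoint U + lam j • (1 : H →L[ℂ] H)) *
      Ring.inverse ((1 : H →L[ℂ] H) + (starRingEnd ℂ) (lam j) • ContinuousLinearMap.adjoint U)).prod

open ContinuousLinearMap in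
theorem blaschke_unitary {H : Type*} [NormedAddCommGroup H] [InnerProductSpace ℂ H]
    [CompleteSpace H] (U : H →L[ℂ] H) (hU₁ : ContinuousLinearMap.adjoint U * U = 1)
    (hU₂ : U * ContinuousLinearMap.adjoint U = 1) {d : ℕ} (lam : Fin d → ℂ)
    (hlam : ∀ j, ‖lam j‖ < 1) : blaschkeOp U lam ∈ unitary (H →L[ℂ] H) := by
  set V := ContinuousLinearMap.adjoint U with hV
  -- norms
  have hiso : ∀ x : H, ‖U x‖ = ‖x‖ := by
    intro x
    have h1 : ⟪U x, U x⟫_ℂ = ⟪x, x⟫_ℂ := by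
      rw [← ContinuousLinearMap.adjoint_inner_left]
      have : ContinuousLinearMap.adjoint U (U x) = x := by
        have := congrArg (fun T : H →L[ℂ] H => T x) hU₁
        simpa using this
      rw [this]
    rw [@norm_eq_sqrt_re_inner ℂ, @norm_eq_sqrt_re_inner ℂ, h1]
  have hUn : ‖U‖ ≤ 1 := by
    refine ContinuousLinearMap.opNorm_le_bound U zero_le_one fun x => ?_
    rw [hiso x, one_mul]
  have hVn : ‖V‖ ≤ 1 := by
    rw [hV]
    calc ‖ContinuousLinearMap.adjoint U‖ = ‖U‖ :=
      (ContinuousLinearMap.adjoint : (H →L[ℂ] H) ≃ₗᵢ⋆[ℂ] (H →L[ℂ] H)).norm_map U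
    _ ≤ 1 := hUn
  apply Submonoid.list_prod_mem
  intro F hF
  rw [List.mem_ofFn] at hF
  obtain ⟨j, rfl⟩ := hF
  set lj := lam j with hlj
  set A : H →L[ℂ] H := V + lj • 1 with hA
  set W : H →L[ℂ] H := 1 + (starRingEnd ℂ) lj • V with hW
  -- W is a unit
  have hWu : IsUnit W := by
    have h : ‖-((starRingEnd ℂ) lj • V)‖ < 1 := by
      rw [norm_neg, norm_smul]
      calc ‖(starRingEnd ℂ) lj‖ * ‖V‖ ≤ ‖(starRingEnd ℂ) lj‖ * 1 := by
            apply mul_le_mul_of_nonneg_left hVn (norm_nonneg _)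
        _ < 1 := by simpa using hlam j
    have := isUnit_one_sub_of_norm_lt_one h
    simpa [sub_neg_eq_add] using this
  -- star computations
  have hstarV : star V = U := by
    rw [hV, ContinuousLinearMap.star_eq_adjoint, ContinuousLinearMap.adjoint_adjoint]
  have hstarA : star A = U + (starRingEnd ℂ) lj • 1 := by
    simp [hA, star_smul, hstarV]
  have hstarW : star W = 1 + lj • U := by
    simp [hW, star_smul, hstarV]
  -- star W is a unit
  have hsWu : IsUnit (star W) := hWu.star
  -- key algebraic identity
  have hUV : U * V = 1 := hU₂
  have hVU : V * U = 1 := hU₁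
  have key : star A * A = star W * W := by
    rw [hstarA, hstarW, hA, hW]
    simp only [mul_add, add_mul, mul_smul_comm, smul_mul_assoc, smul_smul, hUV, hVU,
      one_mul, mul_one, smul_add]
    rw [mul_comm ((starRingEnd ℂ) lj) lj]
    abel
  -- A is a unit
  have hAu : IsUnit A := by
    have hA' : A = V * (1 + lj • U) := by
      rw [hA]
      simp [mul_add, mul_smul_comm, hVU]
    have hVu : IsUnit V := ⟨⟨V, U, hU₁, hU₂⟩, rfl⟩
    rw [hA', ← hstarW]
    exact hVu.mul hsWu
  set F : H →L[ℂ] H := A * Ring.inverse W with hF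
  have hinvWu : IsUnit (Ring.inverse W) := by
    rw [← hWu.unit_spec, Ring.inverse_unit]
    exact Units.isUnit _
  have hFu : IsUnit F := hAu.mul hinvWu
  have hstarF : star F = Ring.inverse (star W) * star A := by
    rw [hF, star_mul, Ring.inverse_star]
  have hleft : star F * F = 1 := by
    rw [hstarF, hF, mul_assoc, ← mul_assoc (star A), key, ← mul_assoc, ← mul_assoc,
      Ring.inverse_mul_cancel _ hsWu, one_mul, Ring.mul_inverse_cancel _ hWu]
  have hright : F * star F = 1 := by
    obtain ⟨u, hu⟩ := hFu
    have h1 : star F = ↑u⁻¹ := by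
      rw [← hu] at hleft ⊢
      exact (Units.inv_eq_of_mul_eq_one_left hleft).symm
    rw [h1, ← hu, Units.mul_inv]
  exact Unitary.mem_iff.mpr ⟨hleft, hright⟩

theorem stmt16 {H : Type*} [NormedAddCommGroup H] [InnerProductSpace ℂ H] [CompleteSpace H]
    (e : HilbertBasis ℕ ℂ H) (U : H →L[ℂ] H) (hU₁ : ContinuousLinearMap.adjoint U * U = 1)
    (hU₂ : U * ContinuousLinearMap.adjoint U = 1) (d : ℕ) (lam : Fin d → ℂ)
    (hlam : ∀ j, ‖lam j‖ < 1) :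
    ∀ k : ℕ,
      blaschkeOp U lam (e k) ∉
        (Submodule.span ℂ
          ((fun m => blaschkeOp U lam (e m)) '' {m : ℕ | m ≠ k})).topologicalClosure ∧
      (Submodule.span ℂ
          ((fun m => blaschkeOp U lam (e m)) '' {m : ℕ | m ≠ k})).topologicalClosure ≠ ⊤ := by
  intro k
  set B := blaschkeOp U lam with hBdef
  have hBu : B ∈ unitary (H →L[ℂ] H) := blaschke_unitary U hU₁ hU₂ lam hlam
  have hBsB : ContinuousLinearMap.adjoint B * B = 1 := by
    rw [← ContinuousLinearMap.star_eq_adjoint]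
    exact Unitary.star_mul_self_of_mem hBu
  have hinner : ∀ x y : H, ⟪B x, B y⟫_ℂ = ⟪x, y⟫_ℂ := by
    intro x y
    rw [← ContinuousLinearMap.adjoint_inner_left]
    congr 1
    have := congrArg (fun T : H →L[ℂ] H => T x) hBsB
    simpa using this
  have horth := orthonormal_iff_ite.mp e.orthonormal
  have hbk : ⟪B (e k), B (e k)⟫_ℂ = 1 := by
    rw [hinner]
    simpa using horth k k
  have hbo : ∀ m : ℕ, m ≠ k → ⟪B (e m), B (e k)⟫_ℂ = 0 := by
    intro m hm
    rw [hinner]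
    simpa [hm] using horth m k
  set S := (fun m => B (e m)) '' {m : ℕ | m ≠ k} with hS
  set K := Submodule.span ℂ S with hK
  have hmem : B (e k) ∈ Kᗮ := by
    rw [Submodule.mem_orthogonal]
    intro u hu
    induction hu using Submodule.span_induction with
    | mem x hx =>
        obtain ⟨m, hm, rfl⟩ := hx
        exact hbo m hm
    | zero => simp
    | add x y _ _ hx hy => rw [inner_add_left, hx, hy, add_zero]
    | smul c x _ hx => rw [inner_smul_left, hx, mul_zero]
  have main : B (e k) ∉ K.topologicalClosure := by
    intro h
    rw [← Submodule.orthogonal_orthogonal_eq_closure] at h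
    have : ⟪B (e k), B (e k)⟫_ℂ = 0 := (Submodule.mem_orthogonal _ _).mp h _ hmem
    rw [hbk] at this
    exact one_ne_zero this
  exact ⟨main, fun h => main (h ▸ Submodule.mem_top)⟩
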